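/- arXiv:2108.07424 — 4 statements merged into one kernel-verified Lean document; each statement's English description precedes it below -/
import Mathlib

section
/- If a choice function C satisfies NC, WCC*, NBC*, and R-WARP, then whenever C displays a strong (xy) reversal (on some menu, due to some alternative), it is not the case that x ≻̄_R y. -/
/-- A rationale is an asymmetric binary relation. -/
def Asym {X : Type*} (R : X → X → Prop) : Prop := ∀ a b, R a b → ¬ R b a

/-- Transitivity of a relation. -/
def Tran {X : Type*} (R : X → X → Prop) : Prop := ∀ a b c, R a b → R b c → R a c

/-- Completeness of a relation: any two distinct elements are related one way or the other. -/
def Comp {X : Type*} (R : X → X → Prop) : Prop := ∀ a b : X, a ≠ b → R a b ∨ R b a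

/-- `x ∈ min(S, R)`: some element of `S` dominates `x` and `x` dominates no element of `S`. -/
def MinSet {X : Type*} (R : X → X → Prop) (S : Finset X) (x : X) : Prop :=
  x ∈ S ∧ (∃ z ∈ S, R z x) ∧ ∀ z ∈ S, ¬ R x z

/-- `x ∈ max(S, R)`: no element of `S` dominates `x`. -/
def MaxSet {X : Type*} (R : X → X → Prop) (S : Finset X) (x : X) : Prop :=
  x ∈ S ∧ ∀ z ∈ S, ¬ R z x

/-- `x ∈ S \ min(S, R)`: `x` survives the first-stage rejection. -/
def Short {X : Type*} (R : X → X → Prop) (S : Finset X) (x : X) : Prop :=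
  x ∈ S ∧ ¬ MinSet R S x

/-- `C` is a choice function: on every nonempty menu it picks an element of the menu. -/
def IsChoice {X : Type*} (C : Finset X → X) : Prop :=
  ∀ S : Finset X, S.Nonempty → C S ∈ S

/-- `(R, P)` is a CBR representation of `C`: `R` is a transitive rationale, `P` a complete
rationale, and for every nonempty menu `S`, `C S` is the unique element of
`max(S \ min(S,R), P)`. -/
def CBR {X : Type*} (C : Finset X → X) (R P : X → X → Prop) : Prop :=
  Asym R ∧ Tran R ∧ Asym P ∧ Comp P ∧
    ∀ S : Finset X, S.Nonempty →
      ∀ x : X, (Short R S x ∧ ∀ z : X, Short R S z → ¬ P z x) ↔ x = C S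

/-- The pairwise revealed relation `x ≻_c y`. -/
def pc {X : Type*} [DecidableEq X] (C : Finset X → X) (x y : X) : Prop :=
  x ≠ y ∧ C {x, y} = x

/-- `C` displays an `(x y)` reversal due to `z` on the menu `S`. -/
def Rev {X : Type*} [DecidableEq X] (C : Finset X → X) (x y z : X) (S : Finset X) : Prop :=
  x ≠ y ∧ x ∈ S ∧ y ∈ S ∧ z ∉ S ∧ C {x, y} = x ∧ C S = x ∧ C (insert z S) = y

/-- A weak `(x y)` reversal due to `z` on `S`: additionally `x ≻_c z`. -/
def WeakRev {X : Type*} [DecidableEq X] (C : Finset X → X) (x y z : X) (S : Finset X) : Prop :=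
  Rev C x y z S ∧ pc C x z

/-- A strong `(x y)` reversal due to `z` on `S`: additionally `z ≻_c x`. -/
def StrongRev {X : Type*} [DecidableEq X] (C : Finset X → X) (x y z : X) (S : Finset X) : Prop :=
  Rev C x y z S ∧ pc C z x

/-- The revealed first-stage relation `x ≻_R y`. -/
def RRel {X : Type*} [DecidableEq X] (C : Finset X → X) (x y : X) : Prop :=
  (∃ w S, WeakRev C x y w S) ∨ (∃ w S, WeakRev C w x y S) ∨ (∃ w S, StrongRev C y w x S)

/-- The transitive closure `≻̄_R` of `≻_R`. -/
def RBar {X : Type*} [DecidableEq X] (C : Finset X → X) : X → X → Prop :=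
  Relation.TransGen (RRel C)

/-- Axiom NC (Never Chosen). -/
def NC {X : Type*} [DecidableEq X] (C : Finset X → X) : Prop :=
  ∀ S : Finset X, ∀ x ∈ S, (∃ y ∈ S, y ≠ x) →
    (∀ y ∈ S, y ≠ x → C {x, y} ≠ x) → C S ≠ x

/-- Axiom WCC* (Weak Contraction Consistency*). -/
def WCCstar {X : Type*} [DecidableEq X] (C : Finset X → X) : Prop :=
  ∀ (x y : X) (S : Finset X), x ≠ y → {x, y} ⊂ S → (C S = x ∨ C S = y) →
    ∃ z ∈ S, z ≠ x ∧ z ≠ y ∧ (C (S.erase z) = x ∨ C (S.erase z) = y)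

/-- Axiom NBC* (No Binary Cycles*): any `≻_R`-chain from `x₁` to `xₙ` yields `x₁ ≻_c xₙ`. -/
def NBCstar {X : Type*} [DecidableEq X] (C : Finset X → X) : Prop :=
  ∀ x y : X, RBar C x y → pc C x y

/-- Axiom R-WARP (Reject-WARP). -/
def RWARP {X : Type*} [DecidableEq X] (C : Finset X → X) : Prop :=
  ∀ (x y : X) (S S' : Finset X), x ≠ y →
    x ∈ S → y ∈ S → x ∈ S' → y ∈ S' →
    ¬ MinSet (RBar C) S y → C S = x → ¬ MinSet (RBar C) S' x → C S' ≠ y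

/-- From `C V = q` and `C {p,q} = p` we can extract a `(p q)` reversal inside `V`. -/
lemma flip_lemma {X : Type*} [DecidableEq X] (C : Finset X → X) (h2 : WCCstar C)
    (p q : X) (hpq : p ≠ q) (hpq2 : C {p, q} = p) :
    ∀ V : Finset X, p ∈ V → q ∈ V → C V = q →
      ∃ w U', insert w U' ⊆ V ∧ Rev C p q w U' := by
  intro V
  induction V using Finset.strongInductionOn with
  | _ V ih =>
    intro hp hq hCV
    have hsub : ({p, q} : Finset X) ⊆ V := by
      intro a ha
      rcases Finset.mem_insert.mp ha with h | h
      · exact h ▸ hp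
      · rw [Finset.mem_singleton] at h; exact h ▸ hq
    rcases hsub.ssubset_or_eq with hssub | heq
    · obtain ⟨w, hwV, hwp, hwq, hc⟩ := h2 p q V hpq hssub (Or.inr hCV)
      have hpw : p ∈ V.erase w := Finset.mem_erase.mpr ⟨Ne.symm hwp, hp⟩
      have hqw : q ∈ V.erase w := Finset.mem_erase.mpr ⟨Ne.symm hwq, hq⟩
      rcases hc with hc | hc
      · refine ⟨w, V.erase w, ?_, hpq, hpw, hqw, Finset.notMem_erase _ _, hpq2, hc, ?_⟩
        · rw [Finset.insert_erase hwV]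
        · rw [Finset.insert_erase hwV]; exact hCV
      · obtain ⟨w', U', hsub', hrev⟩ :=
          ih (V.erase w) (Finset.erase_ssubset hwV) hpw hqw hc
        exact ⟨w', U', hsub'.trans (Finset.erase_subset _ _), hrev⟩
    · rw [← heq] at hCV
      exact absurd (hpq2.symm.trans hCV) hpq

/-- If `C` satisfies NC, WCC*, NBC*, and R-WARP, then a strong `(x y)` reversal implies
`¬ (x ≻̄_R y)`. -/
theorem strong_reversal_not_rbar {X : Type*} [Fintype X] [DecidableEq X]
    (C : Finset X → X) (hC : IsChoice C)
    (h1 : NC C) (h2 : WCCstar C) (h3 : NBCstar C) (h4 : RWARP C) :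
    ∀ (x y z : X) (S : Finset X), StrongRev C x y z S → ¬ RBar C x y := by
  intro x y z S hsr hxy
  have hirr : ∀ a, ¬ RBar C a a := fun a h => (h3 a a h).1 rfl
  have hwf : WellFounded (RBar C) := by
    haveI : IsTrans X (RBar C) := ⟨fun a b c h h' => h.trans h'⟩
    haveI : IsIrrefl X (RBar C) := ⟨hirr⟩
    exact Finite.wellFounded_of_trans_of_irrefl _
  have main : ∀ a : X, RBar C a y → ∀ b U, StrongRev C a y b U → False := by
    refine fun a => hwf.induction (C := fun a => RBar C a y → ∀ b U, StrongRev C a y b U → False) a ?_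
    intro a ih hay b U hSR
    obtain ⟨⟨hay_ne, haU, hyU, hbU, hpair, hCU, hCT⟩, hpcba⟩ := hSR
    have hRba : RRel C b a :=
      Or.inr (Or.inr ⟨y, U, ⟨⟨hay_ne, haU, hyU, hbU, hpair, hCU, hCT⟩, hpcba⟩⟩)
    have hRBba : RBar C b a := Relation.TransGen.single hRba
    have hRBby : RBar C b y := hRBba.trans hay
    have hpcby : pc C b y := h3 _ _ hRBby
    have hbT : b ∈ insert b U := Finset.mem_insert_self _ _
    have hyT : y ∈ (insert b U : Finset X) := Finset.mem_insert_of_mem hyU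
    obtain ⟨w, U', hsubT, hrev⟩ :=
      flip_lemma C h2 b y hpcby.1 hpcby.2 (insert b U) hbT hyT hCT
    obtain ⟨hby_ne, hbU', hyU', hwU', hby2, hCU', hCW⟩ := hrev
    have hwb : w ≠ b := fun h => hwU' (h ▸ hbU')
    have hwIn : w ∈ insert b U := hsubT (Finset.mem_insert_self w U')
    have hbw_mem : C {b, w} ∈ ({b, w} : Finset X) :=
      hC _ ⟨b, Finset.mem_insert_self _ _⟩
    rcases Finset.mem_insert.mp hbw_mem with hcb | hcw
    · -- weak case
      have hpcbw : pc C b w := ⟨Ne.symm hwb, hcb⟩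
      have hweak : WeakRev C b y w U' :=
        ⟨⟨hby_ne, hbU', hyU', hwU', hby2, hCU', hCW⟩, hpcbw⟩
      have hRyw : RBar C y w := Relation.TransGen.single (Or.inr (Or.inl ⟨b, U', hweak⟩))
      have hwU : w ∈ U := by
        rcases Finset.mem_insert.mp hwIn with h | h
        · exact absurd h hwb
        · exact h
      have hnotminUy : ¬ MinSet (RBar C) U y := fun h => h.2.2 w hwU hRyw
      have hnotminTa : ¬ MinSet (RBar C) (insert b U) a := fun h => h.2.2 y hyT hay
      exact h4 a y U (insert b U) hay_ne haU hyU (Finset.mem_insert_of_mem haU) hyT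
        hnotminUy hCU hnotminTa hCT
    · -- strong case
      rw [Finset.mem_singleton] at hcw
      have hpcwb : pc C w b := ⟨hwb, by rw [Finset.pair_comm]; exact hcw⟩
      exact ih b hRBba hRBby w U' ⟨⟨hby_ne, hbU', hyU', hwU', hby2, hCU', hCW⟩, hpcwb⟩
  exact main x hxy z S hsr
end

section
/- If a choice function C satisfies NC, WCC*, NBC*, and R-WARP, then whenever C displays a strong (xy) reversal on a menu S (due to some alternative), for every w ∈ S one has neither x ≻̄_R w nor w ≻̄_R x. -/
private lemma pc_flip {X : Type*} [DecidableEq X] {C : Finset X → X} {a b : X}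
    (h : pc C a b) : C {b, a} = a := by
  rw [Finset.pair_comm]; exact h.2

/-- From `C {c,d} = d` and `C S = c` with `{c,d} ⊆ S`, WCC* yields a menu `U` and an
alternative `w` witnessing a choice flip. -/
private lemma flip_extract {X : Type*} [DecidableEq X] (C : Finset X → X) (h2 : WCCstar C)
    (c d : X) (hcd : c ≠ d) (hpair : C {c, d} = d) :
    ∀ S : Finset X, c ∈ S → d ∈ S → C S = c →
      ∃ (U : Finset X) (w : X), w ∉ U ∧ insert w U ⊆ S ∧ c ∈ U ∧ d ∈ U ∧
        w ≠ c ∧ w ≠ d ∧ C U = d ∧ C (insert w U) = c := by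
  intro S
  induction S using Finset.strongInduction with
  | _ S ih =>
    intro hc hd hCS
    have hsub : ({c, d} : Finset X) ⊂ S := by
      rw [Finset.ssubset_iff_subset_ne]
      refine ⟨Finset.insert_subset hc (Finset.singleton_subset_iff.2 hd), ?_⟩
      intro h
      rw [← h] at hCS
      exact hcd (hCS.symm.trans hpair)
    obtain ⟨z, hzS, hzc, hzd, hCz⟩ := h2 c d S hcd hsub (Or.inl hCS)
    have hcz : c ∈ S.erase z := Finset.mem_erase.2 ⟨Ne.symm hzc, hc⟩
    have hdz : d ∈ S.erase z := Finset.mem_erase.2 ⟨Ne.symm hzd, hd⟩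
    rcases hCz with hCz | hCz
    · obtain ⟨U, w, hwU, hins, hcU, hdU, hwc, hwd, hCU, hCins⟩ :=
        ih (S.erase z) (Finset.erase_ssubset hzS) hcz hdz hCz
      exact ⟨U, w, hwU, hins.trans (Finset.erase_subset z S), hcU, hdU, hwc, hwd, hCU, hCins⟩
    · refine ⟨S.erase z, z, Finset.notMem_erase z S, ?_, hcz, hdz, hzc, hzd, hCz, ?_⟩
      · rw [Finset.insert_erase hzS]
      · rw [Finset.insert_erase hzS]; exact hCS

/-- Under WCC* and NBC*, the chosen element is never minimal with respect to `≻̄_R`. -/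
private lemma chosen_not_min {X : Type*} [Fintype X] [DecidableEq X] (C : Finset X → X)
    (hC : IsChoice C) (h2 : WCCstar C) (h3 : NBCstar C) :
    ∀ S : Finset X, ¬ MinSet (RBar C) S (C S) := by
  intro S hmin
  obtain ⟨hcS, ⟨u, huS, hu⟩, hnd⟩ := hmin
  haveI : IsTrans X (RBar C) := ⟨fun _ _ _ h h' => h.trans h'⟩
  haveI : IsIrrefl X (RBar C) := ⟨fun a h => (h3 a a h).1 rfl⟩
  have hwf : WellFounded (RBar C) := Finite.wellFounded_of_trans_of_irrefl _
  obtain ⟨m, ⟨hmS, hm⟩, hminm⟩ :=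
    hwf.has_min {d | d ∈ S ∧ RBar C d (C S)} ⟨u, huS, hu⟩
  have hpc : pc C m (C S) := h3 _ _ hm
  obtain ⟨U, w, hwU, hins, hcU, hmU, hwc, hwm, hCU, hCins⟩ :=
    flip_extract C h2 (C S) m (Ne.symm hpc.1) (pc_flip hpc) S hcS hmS rfl
  have hrev : Rev C m (C S) w U := ⟨hpc.1, hmU, hcU, hwU, hpc.2, hCU, hCins⟩
  have hwS : w ∈ S := hins (Finset.mem_insert_self w U)
  have hmem : C {m, w} ∈ ({m, w} : Finset X) :=
    hC _ ⟨m, Finset.mem_insert_self m {w}⟩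
  rcases Finset.mem_insert.1 hmem with hcase | hcase
  · -- weak reversal: C {m, w} = m
    have hweak : WeakRev C m (C S) w U := ⟨hrev, Ne.symm hwm, hcase⟩
    have : RRel C (C S) w := Or.inr (Or.inl ⟨m, U, hweak⟩)
    exact hnd w hwS (Relation.TransGen.single this)
  · -- strong reversal: C {m, w} = w
    have hcase' : C {m, w} = w := Finset.mem_singleton.1 hcase
    have hstrong : StrongRev C m (C S) w U :=
      ⟨hrev, hwm, by rw [Finset.pair_comm]; exact hcase'⟩
    have hrwm : RRel C w m := Or.inr (Or.inr ⟨C S, U, hstrong⟩)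
    exact hminm w ⟨hwS, Relation.TransGen.head hrwm hm⟩ (Relation.TransGen.single hrwm)

/-- If `C` satisfies NC, WCC*, NBC*, and R-WARP, then a strong `(x y)` reversal on a menu
`S` implies that `x` is `≻̄_R`-unrelated to every element of `S`. -/
theorem strong_reversal_isolated {X : Type*} [Fintype X] [DecidableEq X]
    (C : Finset X → X) (hC : IsChoice C)
    (h1 : NC C) (h2 : WCCstar C) (h3 : NBCstar C) (h4 : RWARP C) :
    ∀ (x y z : X) (S : Finset X), StrongRev C x y z S →
      ∀ w ∈ S, ¬ RBar C x w ∧ ¬ RBar C w x := by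
  intro x y z S hsr w hwS
  have hrzx : RRel C z x := Or.inr (Or.inr ⟨y, S, hsr⟩)
  obtain ⟨⟨hxy, hxS, hyS, hzS, hpxy, hCS, hCT⟩, hzx⟩ := hsr
  have hA := chosen_not_min C hC h2 h3
  have hxT : x ∈ insert z S := Finset.mem_insert_of_mem hxS
  have hyT : y ∈ insert z S := Finset.mem_insert_of_mem hyS
  have key : MinSet (RBar C) S y ∨ MinSet (RBar C) (insert z S) x := by
    by_contra h
    push_neg at h
    exact h4 x y S (insert z S) hxy hxS hyS hxT hyT h.1 hCS h.2 hCT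
  have hminTx : MinSet (RBar C) (insert z S) x := by
    rcases key with hmy | h
    · exfalso
      obtain ⟨_, ⟨u, huS, hu⟩, hnd⟩ := hmy
      have hminTy : MinSet (RBar C) (insert z S) y := by
        refine ⟨hyT, ⟨u, Finset.mem_insert_of_mem huS, hu⟩, ?_⟩
        intro v hv
        rcases Finset.mem_insert.1 hv with rfl | hvS
        · intro hyz
          have hyx : RBar C y x := hyz.trans (Relation.TransGen.single hrzx)
          have hpyx := (h3 y x hyx).2
          rw [Finset.pair_comm] at hpyx
          exact hxy (hpxy.symm.trans hpyx)
        · exact hnd v hvS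
      exact hA (insert z S) (by rw [hCT]; exact hminTy)
    · exact h
  constructor
  · exact fun hxw => hminTx.2.2 w (Finset.mem_insert_of_mem hwS) hxw
  · intro hwx
    have hminSx : MinSet (RBar C) S x :=
      ⟨hxS, ⟨w, hwS, hwx⟩, fun v hv => hminTx.2.2 v (Finset.mem_insert_of_mem hv)⟩
    exact hA S (by rw [hCS]; exact hminSx)
end

section
/- If a choice function C satisfies NC, WCC*, NBC*, and R-WARP and C displays a weak (xy) reversal (on some menu, due to some alternative), then there do not exist y' ∈ X and a menu S such that either C displays a strong (xy') reversal on S with y ∈ S, or C displays a strong (yy') reversal on S with x ∈ S. -/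
-- Lemma B
lemma lemB {X : Type*} [DecidableEq X] {C : Finset X → X} (h2 : WCCstar C) :
    ∀ S : Finset X, ∀ a b : X, a ≠ b → a ∈ S → b ∈ S → C {a, b} = a → C S = b →
      ∃ u M, u ∈ S ∧ M ⊆ S ∧ Rev C a b u M := by
  intro S
  induction S using Finset.strongInduction with
  | _ S ih =>
    intro a b hab haS hbS hpair hS
    have hne : ({a, b} : Finset X) ≠ S := by
      rintro rfl; rw [hpair] at hS; exact hab hS
    have hsub : ({a, b} : Finset X) ⊂ S :=
      (Finset.ssubset_iff_subset_ne).2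
        ⟨Finset.insert_subset haS (Finset.singleton_subset_iff.2 hbS), hne⟩
    obtain ⟨u, huS, hua, hub, hch⟩ := h2 a b S hab hsub (Or.inr hS)
    have haE : a ∈ S.erase u := Finset.mem_erase.2 ⟨Ne.symm hua, haS⟩
    have hbE : b ∈ S.erase u := Finset.mem_erase.2 ⟨Ne.symm hub, hbS⟩
    rcases hch with hca | hcb
    · refine ⟨u, S.erase u, huS, Finset.erase_subset _ _, hab, haE, hbE,
        Finset.notMem_erase _ _, hpair, hca, ?_⟩
      rw [Finset.insert_erase huS]; exact hS
    · obtain ⟨v, M, hvE, hME, hrev⟩ :=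
        ih (S.erase u) (Finset.erase_ssubset huS) a b hab haE hbE hpair hcb
      exact ⟨v, M, Finset.erase_subset _ _ hvE, hME.trans (Finset.erase_subset _ _), hrev⟩

-- Lemma A : the chosen element is never minimal
lemma lemA {X : Type*} [Fintype X] [DecidableEq X] {C : Finset X → X} (hC : IsChoice C)
    (h2 : WCCstar C) (h3 : NBCstar C) :
    ∀ S : Finset X, S.Nonempty → ¬ MinSet (RBar C) S (C S) := by
  intro S hS hmin
  obtain ⟨hcS, ⟨w, hwS, hwc⟩, hdom⟩ := hmin
  have wf : WellFounded (RBar C) := by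
    haveI : IsTrans X (RBar C) := ⟨fun a b c => Relation.TransGen.trans⟩
    haveI : IsIrrefl X (RBar C) := ⟨fun a h => (h3 a a h).1 rfl⟩
    exact Finite.wellFounded_of_trans_of_irrefl _
  have key : ∀ u, RBar C u (C S) → u ∈ S → False := by
    intro u
    induction u using WellFounded.induction wf with
    | _ u ih =>
      intro huc huS
      have hpc : pc C u (C S) := h3 u (C S) huc
      obtain ⟨v, M, hvS, hMS, hrev⟩ :=
        lemB h2 S u (C S) hpc.1 huS hcS hpc.2 rfl
      have hvu : v ≠ u := fun h => hrev.2.2.2.1 (h ▸ hrev.2.1)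
      have hmem := hC {u, v} ⟨u, Finset.mem_insert_self _ _⟩
      rcases Finset.mem_insert.1 hmem with hcu | hcv
      · -- weak reversal : C S ≻_R v, contradicting minimality
        have hwk : WeakRev C u (C S) v M := ⟨hrev, hvu.symm, hcu⟩
        exact hdom v hvS (Relation.TransGen.single (Or.inr (Or.inl ⟨u, M, hwk⟩)))
      · -- strong reversal : v ≻_R u, recurse
        have hcv' : C {u, v} = v := Finset.mem_singleton.1 hcv
        have hpcvu : pc C v u := ⟨hvu, by rw [Finset.pair_comm]; exact hcv'⟩
        have hst : StrongRev C u (C S) v M := ⟨hrev, hpcvu⟩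
        have hvRu : RBar C v u := Relation.TransGen.single (Or.inr (Or.inr ⟨C S, M, hst⟩))
        exact ih v hvRu (hvRu.trans huc) hvS
  exact key w hwc hwS

/-- If `C` satisfies NC, WCC*, NBC*, and R-WARP and displays a weak `(x y)` reversal,
then there is no `y'` and menu `S` on which `C` displays a strong `(x y')` reversal with
`y ∈ S`, or a strong `(y y')` reversal with `x ∈ S`. -/
theorem weak_reversal_excludes_strong {X : Type*} [Fintype X] [DecidableEq X]
    (C : Finset X → X) (hC : IsChoice C)
    (h1 : NC C) (h2 : WCCstar C) (h3 : NBCstar C) (h4 : RWARP C) :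
    ∀ (x y z : X) (T : Finset X), WeakRev C x y z T →
      ¬ ∃ (y' z' : X) (S : Finset X),
        (StrongRev C x y' z' S ∧ y ∈ S) ∨ (StrongRev C y y' z' S ∧ x ∈ S) := by
  intro x y z T hweak
  rintro ⟨y', z', S, hcase⟩
  have hxy : RBar C x y := Relation.TransGen.single (Or.inl ⟨z, T, hweak⟩)
  have irr : ∀ a, ¬ RBar C a a := fun a h => (h3 a a h).1 rfl
  rcases hcase with ⟨hst, hyS⟩ | ⟨hst, hxS⟩
  · -- strong (x y') reversal on S, y ∈ S
    obtain ⟨⟨hxy', hxS, hy'S, hz'S, hpair, hCS, hCS'⟩, hpcz'x⟩ := hst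
    have hz'x : RBar C z' x :=
      Relation.TransGen.single (Or.inr (Or.inr ⟨y', S, ⟨hxy', hxS, hy'S, hz'S, hpair, hCS, hCS'⟩, hpcz'x⟩))
    have hxS' : x ∈ insert z' S := Finset.mem_insert_of_mem hxS
    have hy'S' : y' ∈ insert z' S := Finset.mem_insert_of_mem hy'S
    have notMinx : ¬ MinSet (RBar C) (insert z' S) x :=
      fun h => h.2.2 y (Finset.mem_insert_of_mem hyS) hxy
    have RW : ∀ S₁ : Finset X, y' ∈ S₁ → x ∈ S₁ → ¬ MinSet (RBar C) S₁ y' → C S₁ ≠ x :=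
      fun S₁ h1 h2' h3' =>
        h4 y' x (insert z' S) S₁ hxy'.symm hy'S' hxS' h1 h2' notMinx hCS' h3'
    by_cases hm : MinSet (RBar C) ({x, y'} : Finset X) y'
    · obtain ⟨_, ⟨v, hv, hvy'⟩, hall⟩ := hm
      have hny'x : ¬ RBar C y' x := hall x (Finset.mem_insert_self _ _)
      have hxRy' : RBar C x y' := by
        rcases Finset.mem_insert.1 hv with rfl | hv'
        · exact hvy'
        · exact absurd hvy' (by rw [Finset.mem_singleton.1 hv']; exact irr y')
      have hnm : ¬ MinSet (RBar C) (insert z' S) (C (insert z' S)) :=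
        lemA hC h2 h3 _ ⟨x, hxS'⟩
      rw [hCS'] at hnm
      have : ∃ v ∈ insert z' S, RBar C y' v := by
        by_contra hno
        push_neg at hno
        exact hnm ⟨hy'S', ⟨x, hxS', hxRy'⟩, hno⟩
      obtain ⟨v, hvS', hy'v⟩ := this
      rcases Finset.mem_insert.1 hvS' with rfl | hvS
      · exact hny'x (hy'v.trans hz'x)
      · exact RW S hy'S hxS (fun h => h.2.2 v hvS hy'v) hCS
    · exact RW {x, y'} (Finset.mem_insert_of_mem (Finset.mem_singleton_self _))
        (Finset.mem_insert_self _ _) hm hpair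
  · -- strong (y y') reversal on S, x ∈ S
    obtain ⟨⟨hyy', hyS, hy'S, hz'S, hpair, hCS, hCS'⟩, hpcz'y⟩ := hst
    have hz'y : RBar C z' y :=
      Relation.TransGen.single (Or.inr (Or.inr ⟨y', S, ⟨hyy', hyS, hy'S, hz'S, hpair, hCS, hCS'⟩, hpcz'y⟩))
    have hyS' : y ∈ insert z' S := Finset.mem_insert_of_mem hyS
    have hy'S' : y' ∈ insert z' S := Finset.mem_insert_of_mem hy'S
    -- y is not minimal in S (Lemma A) hence dominates some v ∈ S
    have hnmS : ¬ MinSet (RBar C) S (C S) := lemA hC h2 h3 S ⟨y, hyS⟩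
    rw [hCS] at hnmS
    have : ∃ v ∈ S, RBar C y v := by
      by_contra hno
      push_neg at hno
      exact hnmS ⟨hyS, ⟨x, hxS, hxy⟩, hno⟩
    obtain ⟨v, hvS, hyv⟩ := this
    have notMiny : ¬ MinSet (RBar C) (insert z' S) y :=
      fun h => h.2.2 v (Finset.mem_insert_of_mem hvS) hyv
    have RW : ∀ S₁ : Finset X, y' ∈ S₁ → y ∈ S₁ → ¬ MinSet (RBar C) S₁ y' → C S₁ ≠ y :=
      fun S₁ h1 h2' h3' =>
        h4 y' y (insert z' S) S₁ hyy'.symm hy'S' hyS' h1 h2' notMiny hCS' h3'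
    by_cases hm : MinSet (RBar C) ({y, y'} : Finset X) y'
    · obtain ⟨_, ⟨w, hw, hwy'⟩, hall⟩ := hm
      have hny'y : ¬ RBar C y' y := hall y (Finset.mem_insert_self _ _)
      have hyRy' : RBar C y y' := by
        rcases Finset.mem_insert.1 hw with rfl | hw'
        · exact hwy'
        · exact absurd hwy' (by rw [Finset.mem_singleton.1 hw']; exact irr y')
      have hnm : ¬ MinSet (RBar C) (insert z' S) (C (insert z' S)) :=
        lemA hC h2 h3 _ ⟨y, hyS'⟩
      rw [hCS'] at hnm
      have : ∃ w ∈ insert z' S, RBar C y' w := by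
        by_contra hno
        push_neg at hno
        exact hnm ⟨hy'S', ⟨y, hyS', hyRy'⟩, hno⟩
      obtain ⟨w, hwS', hy'w⟩ := this
      rcases Finset.mem_insert.1 hwS' with rfl | hwS
      · exact hny'y (hy'w.trans hz'y)
      · exact RW S hy'S hyS (fun h => h.2.2 w hwS hy'w) hCS
    · exact RW {y, y'} (Finset.mem_insert_of_mem (Finset.mem_singleton_self _))
        (Finset.mem_insert_self _ _) hm hpair
end

section
/- If a choice function C is CBR-representable, then C satisfies Negative Expansion: for all alternatives x, y and all menus S, S' with {x,y} ⊆ S and {x,y} ⊆ S', if C(S) = C(S') = x, then C(S ∪ S') ≠ y. -/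
/-- If `C` is CBR representable, then `C` satisfies Negative Expansion: for menus `S, S'`
both containing the pair `{x, y}`, if `C S = C S' = x` then `C (S ∪ S') ≠ y`. -/
theorem cbr_negative_expansion {X : Type*} [Fintype X] [DecidableEq X]
    (C : Finset X → X) (hC : IsChoice C)
    (hrep : ∃ R P : X → X → Prop, CBR C R P) :
    ∀ (x y : X) (S S' : Finset X), x ≠ y →
      x ∈ S → y ∈ S → x ∈ S' → y ∈ S' →
      C S = x → C S' = x → C (S ∪ S') ≠ y := by
  obtain ⟨R, P, hRa, hRt, hPa, hPc, hiff⟩ := hrep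
  intro x y S S' hxy hxS hyS hxS' hyS' hCS hCS' hCT
  have hSne : S.Nonempty := ⟨x, hxS⟩
  have hS'ne : S'.Nonempty := ⟨x, hxS'⟩
  have hTne : (S ∪ S').Nonempty := ⟨x, Finset.mem_union_left _ hxS⟩
  obtain ⟨hSx, hSmax⟩ := (hiff S hSne x).mpr hCS.symm
  obtain ⟨hS'x, hS'max⟩ := (hiff S' hS'ne x).mpr hCS'.symm
  obtain ⟨hTy, hTmax⟩ := (hiff (S ∪ S') hTne y).mpr hCT.symm
  -- x survives the first stage on the union
  have hxT : Short R (S ∪ S') x := by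
    refine ⟨Finset.mem_union_left _ hxS, ?_⟩
    rintro ⟨_, ⟨z, hz, hzx⟩, hnone⟩
    rcases Finset.mem_union.mp hz with hz | hz
    · exact hSx.2 ⟨hxS, ⟨z, hz, hzx⟩, fun w hw => hnone w (Finset.mem_union_left _ hw)⟩
    · exact hS'x.2 ⟨hxS', ⟨z, hz, hzx⟩, fun w hw => hnone w (Finset.mem_union_right _ hw)⟩
  have hPyx : P y x := by
    rcases hPc x y hxy with h | h
    · exact absurd h (hTmax x hxT)
    · exact h
  by_cases hdom : ∃ w ∈ S ∪ S', R y w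
  · obtain ⟨w, hw, hyw⟩ := hdom
    rcases Finset.mem_union.mp hw with hw | hw
    · exact hSmax y ⟨hyS, fun hm => hm.2.2 w hw hyw⟩ hPyx
    · exact hS'max y ⟨hyS', fun hm => hm.2.2 w hw hyw⟩ hPyx
  · push_neg at hdom
    by_cases hbeat : ∃ z ∈ S ∪ S', R z y
    · exact hTy.2 ⟨Finset.mem_union_left _ hyS, hbeat, hdom⟩
    · push_neg at hbeat
      have hShy : Short R S y := ⟨hyS, fun hm => by
        obtain ⟨z, hz, hzy⟩ := hm.2.1
        exact hbeat z (Finset.mem_union_left _ hz) hzy⟩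
      exact hSmax y hShy hPyx
end
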